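/- arXiv:0802.0116 — 10 statements merged into one kernel-verified Lean document; each statement's English description precedes it below -/
import Mathlib

section
/- Let κ be a truth valuation satisfying a propositional formula φ over variables V, and define the substitution σ by σ(a) = a ∧ φ if κ(a) = false and σ(a) = φ → a otherwise. Then the formula φσ (i.e., φ with every variable a replaced by σ(a)) is a propositional tautology. -/
/-- Propositional formulas over variables `V`. -/
inductive PropForm (V : Type) : Type
  | bot : PropForm V
  | var : V → PropForm V
  | neg : PropForm V → PropForm V
  | and : PropForm V → PropForm V → PropForm V

namespace PropForm

/-- Derived implication. -/
def imp {V : Type} (φ ψ : PropForm V) : PropForm V := neg (and φ (neg ψ))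

/-- Evaluation of a formula under a truth valuation. -/
def eval {V : Type} (κ : V → Bool) : PropForm V → Bool
  | bot => false
  | var a => κ a
  | neg φ => !(eval κ φ)
  | and φ ψ => eval κ φ && eval κ ψ

/-- Homomorphic extension of a substitution to formulas. -/
def subst {V : Type} (σ : V → PropForm V) : PropForm V → PropForm V
  | bot => bot
  | var a => σ a
  | neg φ => neg (subst σ φ)
  | and φ ψ => and (subst σ φ) (subst σ ψ)

/-- A tautology is a formula true under every valuation. -/
def Tautology {V : Type} (φ : PropForm V) : Prop := ∀ κ : V → Bool, eval κ φ = true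

end PropForm

open PropForm

/-! Evaluating `φσ` under a valuation `τ` is evaluating `φ` under `a ↦ τ(σ a)`. When `τ` satisfies
`φ`, each `σ a` evaluates to `τ a`, so `φσ` gets the value of `φ` under `τ`; otherwise each `σ a`
evaluates to `κ a`, so `φσ` gets the value of `φ` under `κ`. Either way it is true. -/

namespace PropForm

variable {V : Type}

theorem eval_subst (τ : V → Bool) (σ : V → PropForm V) (ψ : PropForm V) :
    eval τ (subst σ ψ) = eval (fun a => eval τ (σ a)) ψ := by
  induction ψ with
  | bot => rfl
  | var a => rfl
  | neg ψ ih => simp only [subst, eval, ih]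
  | and ψ χ ihψ ihχ => simp only [subst, eval, ihψ, ihχ]

def lowenheimSubst (φ : PropForm V) (κ : V → Bool) (a : V) : PropForm V :=
  if κ a then imp φ (var a) else and (var a) φ

theorem eval_lowenheimSubst (φ : PropForm V) (κ τ : V → Bool) (a : V) :
    eval τ (lowenheimSubst φ κ a) = if eval τ φ then τ a else κ a := by
  unfold lowenheimSubst
  cases hτ : eval τ φ <;> cases κ a <;> simp [imp, eval, hτ]

theorem tautology_subst_lowenheimSubst {φ : PropForm V} {κ : V → Bool} (hκ : eval κ φ = true) :
    Tautology (subst (lowenheimSubst φ κ) φ) := by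
  intro τ
  simp only [eval_subst, eval_lowenheimSubst]
  cases hτ : eval τ φ
  · simpa using hκ
  · simpa using hτ

end PropForm

theorem stmt1 {V : Type} (φ : PropForm V) (κ : V → Bool)
    (hκ : eval κ φ = true) (σ : V → PropForm V)
    (hσ : ∀ a : V, σ a = if κ a then imp φ (var a) else and (var a) φ) :
    Tautology (subst σ φ) := by
  obtain rfl : σ = lowenheimSubst φ κ := funext hσ
  exact tautology_subst_lowenheimSubst hκ
end

section
/- Let X be a set, A ⊆ X, and let ψ be a finite conjunction of literals of the form □a or ¬□a with a ∈ V, interpreted over a valuation τ : V → Set X by: A satisfies □a iff A ⊆ τ(a), and A satisfies ¬□a iff A ⊄ τ(a). If A satisfies ψ, then there exists Y ⊆ A with |Y| at most the number of negative literals in ψ such that Y satisfies ψ under the restricted valuation τ_Y(a) = τ(a) ∩ Y. -/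
/-- A literal `(true, a)` stands for `□a`, `(false, a)` for `¬□a`.
A set `A ⊆ X` satisfies `□a` under valuation `τ` iff `A ⊆ τ a`. -/
def litSat {X V : Type} (τ : V → Set X) (A : Set X) (l : Bool × V) : Prop :=
  if l.1 then A ⊆ τ l.2 else ¬ (A ⊆ τ l.2)

theorem stmt2 {X V : Type} (τ : V → Set X) (A : Set X) (ψ : List (Bool × V))
    (hsat : ∀ l ∈ ψ, litSat τ A l) :
    ∃ Y : Set X, Y ⊆ A ∧ Y.Finite ∧
      Y.ncard ≤ (ψ.filter (fun l => !l.1)).length ∧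
      ∀ l ∈ ψ, litSat (fun a => τ a ∩ Y) Y l := by
  classical
  set neg := ψ.filter (fun l => !l.1) with hneg
  have hw : ∀ p : {l // l ∈ neg}, ∃ x, x ∈ A ∧ x ∉ τ p.1.2 := by
    rintro ⟨l, hl⟩
    rw [hneg, List.mem_filter] at hl
    have h := hsat l hl.1
    unfold litSat at h
    have hb : l.1 = false := by
      cases h' : l.1 with
      | true => simp [h'] at hl
      | false => rfl
    rw [hb] at h
    rw [if_neg (by simp)] at h
    exact Set.not_subset.mp h
  choose w hwA hwT using hw
  set L := neg.attach.map w with hL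
  set Y : Set X := ↑L.toFinset with hY
  have hYA : Y ⊆ A := by
    intro x hx
    have hx' : x ∈ L := List.mem_toFinset.mp hx
    rw [hL] at hx'
    rcases List.mem_map.mp hx' with ⟨p, _, rfl⟩
    exact hwA p
  have hYfin : Y.Finite := L.toFinset.finite_toSet
  refine ⟨Y, hYA, hYfin, ?_, ?_⟩
  · calc Y.ncard = L.toFinset.card := by rw [hY, Set.ncard_coe_finset]
      _ ≤ L.length := L.toFinset_card_le
      _ = neg.attach.length := by rw [hL, List.length_map]
      _ = neg.length := List.length_attach
  · intro l hl
    unfold litSat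
    cases hb : l.1 with
    | true =>
        rw [if_pos rfl]
        have hpos := hsat l hl
        unfold litSat at hpos
        rw [hb, if_pos rfl] at hpos
        exact Set.subset_inter (hYA.trans hpos) subset_rfl
    | false =>
        rw [if_neg (by simp)]
        intro hcon
        have hlneg : l ∈ neg := by
          rw [hneg, List.mem_filter]; exact ⟨hl, by simp [hb]⟩
        have hxY : w ⟨l, hlneg⟩ ∈ Y := by
          simp only [hY, List.coe_toFinset, Set.mem_setOf_eq, hL, List.mem_map]
          exact ⟨⟨l, hlneg⟩, List.mem_attach _ _, rfl⟩
        exact hwT ⟨l, hlneg⟩ (hcon hxY).1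
end

section
/- Let X be a set, x ∈ A ⊆ X, and ψ a finite conjunction of literals □a / ¬□a over variables V interpreted via a valuation τ : V → Set X (where A satisfies □a iff A ⊆ τ(a)). If A satisfies ψ, then there exists Y ⊆ A with x ∈ Y and |Y| ≤ 1 + (number of negative literals in ψ) such that Y satisfies ψ under τ_Y(a) = τ(a) ∩ Y, and moreover for all a ∈ V, x ∈ τ_Y(a) iff x ∈ τ(a). -/
theorem stmt3 {X V : Type} (τ : V → Set X) (A : Set X) (x : X) (hx : x ∈ A)
    (ψ : List (Bool × V)) (hsat : ∀ l ∈ ψ, litSat τ A l) :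
    ∃ Y : Set X, Y ⊆ A ∧ x ∈ Y ∧ Y.Finite ∧
      Y.ncard ≤ 1 + (ψ.filter (fun l => !l.1)).length ∧
      (∀ l ∈ ψ, litSat (fun a => τ a ∩ Y) Y l) ∧
      ∀ a : V, x ∈ τ a ∩ Y ↔ x ∈ τ a := by
  classical
  set neg := ψ.filter (fun l => !l.1) with hneg
  -- witness function
  set g : Bool × V → X := fun l =>
    if h : ∃ y, y ∈ A ∧ y ∉ τ l.2 then h.choose else x with hg
  set Y : Set X := insert x (↑(neg.map g).toFinset) with hY
  have hgneg : ∀ l ∈ neg, g l ∈ A ∧ g l ∉ τ l.2 := by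
    intro l hl
    have hlψ : l ∈ ψ := (List.mem_filter.mp hl).1
    have hb : l.1 = false := by
      have := (List.mem_filter.mp hl).2
      simpa using this
    have : ¬ (A ⊆ τ l.2) := by simpa [litSat, hb] using hsat l hlψ
    have hex : ∃ y, y ∈ A ∧ y ∉ τ l.2 := by
      rcases Set.not_subset.mp this with ⟨y, hy1, hy2⟩
      exact ⟨y, hy1, hy2⟩
    simp only [hg, dif_pos hex]
    exact hex.choose_spec
  have hYA : Y ⊆ A := by
    intro y hy
    rcases hy with rfl | hy
    · exact hx
    · simp only [Finset.mem_coe, List.mem_toFinset, List.mem_map] at hy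
      rcases hy with ⟨l, hl, rfl⟩
      exact (hgneg l hl).1
  have hxY : x ∈ Y := Set.mem_insert _ _
  have hfin : Y.Finite := Set.Finite.insert _ (Set.finite_coe_iff.mp (by infer_instance))
  refine ⟨Y, hYA, hxY, hfin, ?_, ?_, ?_⟩
  · calc Y.ncard ≤ 1 + (↑(neg.map g).toFinset : Set X).ncard :=
          Set.ncard_insert_le _ _ |>.trans (by rw [add_comm])
      _ ≤ 1 + neg.length := by
          gcongr
          rw [Set.ncard_coe_finset]
          exact (List.toFinset_card_le _).trans (by simp)
  · intro l hl
    rw [litSat]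
    by_cases hb : l.1 = true
    · rw [if_pos (by simp [hb])]
      have := hsat l hl
      rw [litSat, if_pos (by simp [hb])] at this
      exact fun y hy => ⟨this (hYA hy), hy⟩
    · rw [if_neg hb]
      intro hcon
      have hlneg : l ∈ neg := List.mem_filter.mpr ⟨hl, by simp_all⟩
      have hgY : g l ∈ Y := Set.mem_insert_of_mem _ (by
        simp only [Finset.mem_coe, List.mem_toFinset, List.mem_map]
        exact ⟨l, hlneg, rfl⟩)
      exact (hgneg l hlneg).2 (hcon hgY).1
  · intro a
    constructor
    · exact fun h => h.1
    · exact fun h => ⟨h, hxY⟩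
end

section
/- Every modal formula of K (built from ⊥, ∧, ¬, and unary □) of rank n that is satisfiable in some Kripke frame is satisfiable at the root of a Kripke frame whose underlying graph is a finite tree of depth at most n. -/
/-- Formulas of the modal logic `K`. -/
inductive KForm : Type
  | bot : KForm
  | neg : KForm → KForm
  | and : KForm → KForm → KForm
  | box : KForm → KForm

namespace KForm

/-- The rank of a formula: maximal nesting depth of `□`. -/
def rank : KForm → ℕ
  | bot => 0
  | neg φ => rank φ
  | and φ ψ => max (rank φ) (rank ψ)
  | box φ => rank φ + 1

/-- Kripke satisfaction over a frame `(X, R)`. -/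
def sat {X : Type} (R : X → X → Prop) : X → KForm → Prop
  | _, bot => False
  | x, neg φ => ¬ sat R x φ
  | x, and φ ψ => sat R x φ ∧ sat R x ψ
  | x, box φ => ∀ y, R x y → sat R y φ

end KForm

/-- `(X, R)` is a tree with root `root` of depth at most `n`: every node is
reachable from the root, edges increase a depth function bounded by `n`, the
root has no predecessor, and every other node has a unique predecessor. -/
def IsTreeOfDepth {X : Type} (R : X → X → Prop) (root : X) (n : ℕ) : Prop :=
  ∃ d : X → ℕ, d root = 0 ∧
    (∀ x, Relation.ReflTransGen R root x) ∧
    (∀ x y, R x y → d y = d x + 1) ∧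
    (∀ x, d x ≤ n) ∧
    (∀ y, y ≠ root → ∃! x, R x y) ∧
    (∀ x, ¬ R x root)

/-!
Unravel a pointed model `(X, R, x₀)` of `φ` into a tree of depth `rank φ` whose nodes are lists of
formulas `ψ` with `□ψ` in `φ`: the child `χ :: l` of `l` exists only when `□χ` fails at the label
of `l`, and it is labelled by an `R`-successor of that label refuting `χ`. Since every failing `□χ`
is witnessed by a child and every child is labelled by a successor, a node of depth `k` agrees with
its label on formulas of rank at most `rank φ - k` whose boxed subformulas occur in `φ`. Bounded
branching and depth make the tree finite.
-/

namespace KForm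

/-- The formulas `ψ` such that `□ψ` is a subformula. -/
def boxedSubformulas : KForm → Set KForm
  | bot => ∅
  | neg φ => boxedSubformulas φ
  | and φ ψ => boxedSubformulas φ ∪ boxedSubformulas ψ
  | box φ => insert φ (boxedSubformulas φ)

theorem finite_boxedSubformulas (φ : KForm) : φ.boxedSubformulas.Finite := by
  induction φ with
  | bot => exact Set.finite_empty
  | neg φ ih => exact ih
  | and φ ψ ihφ ihψ => exact ihφ.union ihψ
  | box φ ih => exact ih.insert φ

end KForm

namespace Unravel

open KForm

variable {X : Type} (R : X → X → Prop)

open Classical in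
noncomputable def refuter (x : X) (χ : KForm) : X :=
  if h : ∃ y, R x y ∧ ¬ sat R y χ then h.choose else x

theorem refuter_spec {x : X} {χ : KForm} (h : ¬ sat R x (box χ)) :
    R x (refuter R x χ) ∧ ¬ sat R (refuter R x χ) χ := by
  have hex : ∃ y, R x y ∧ ¬ sat R y χ := by simpa [sat] using h
  rw [refuter, dif_pos hex]
  exact hex.choose_spec

variable (x₀ : X) {Γ : Set KForm}

noncomputable def label : List Γ → X
  | [] => x₀
  | χ :: l => refuter R (label l) χ

variable (n : ℕ)

def IsNode : List Γ → Prop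
  | [] => True
  | χ :: l => l.length < n ∧ ¬ sat R (label R x₀ l) (box χ) ∧ IsNode l

variable (Γ) in
def Node : Type := {l : List Γ // IsNode R x₀ n l}

variable (Γ) in
def Child (s t : Node R x₀ Γ n) : Prop :=
  ∃ χ, t.val = χ :: s.val

variable {R x₀ n}

theorem IsNode.length_le : ∀ {l : List Γ}, IsNode R x₀ n l → l.length ≤ n
  | [], _ => Nat.zero_le n
  | _ :: _, h => h.1

theorem finite_node (hΓ : Γ.Finite) : Finite (Node R x₀ Γ n) :=
  have := hΓ.to_subtype
  ((List.finite_length_le Γ n).subset fun _ => IsNode.length_le).to_subtype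

theorem sat_node_iff_sat_label {ψ : KForm} (hψ : ψ.boxedSubformulas ⊆ Γ) {l : List Γ}
    (hl : IsNode R x₀ n l) (hrank : l.length + ψ.rank ≤ n) :
    sat (Child R x₀ Γ n) ⟨l, hl⟩ ψ ↔ sat R (label R x₀ l) ψ := by
  induction ψ generalizing l with
  | bot => rfl
  | neg ψ ih => exact not_congr (ih hψ hl hrank)
  | and ψ χ ihψ ihχ =>
    simp only [boxedSubformulas, Set.union_subset_iff] at hψ
    simp only [rank] at hrank
    exact and_congr (ihψ hψ.1 hl (by omega)) (ihχ hψ.2 hl (by omega))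
  | box ψ ih =>
    simp only [boxedSubformulas, Set.insert_subset_iff] at hψ
    simp only [rank] at hrank
    constructor
    · intro hnode
      by_contra hlabel
      have hchild : IsNode R x₀ n (⟨ψ, hψ.1⟩ :: l) := ⟨by omega, hlabel, hl⟩
      have hsat := hnode ⟨_, hchild⟩ ⟨_, rfl⟩
      rw [ih hψ.2 hchild (by simp only [List.length_cons]; omega)] at hsat
      exact (refuter_spec R hlabel).2 hsat
    · rintro hlabel ⟨_, hchild⟩ ⟨χ, rfl⟩
      rw [ih hψ.2 hchild (by simp only [List.length_cons]; omega)]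
      exact hlabel _ (refuter_spec R hchild.2.1).1

variable (R x₀ Γ n) in
theorem isTreeOfDepth_child : IsTreeOfDepth (Child R x₀ Γ n) ⟨[], trivial⟩ n := by
  refine ⟨fun t => t.val.length, rfl, ?reachable, ?depth_succ, fun t => t.2.length_le,
    ?unique_parent, ?root⟩
  case reachable =>
    rintro ⟨l, hl⟩
    induction l with
    | nil => exact .refl
    | cons χ l ih => exact .tail (ih hl.2.2) ⟨χ, rfl⟩
  case depth_succ =>
    rintro s t ⟨χ, h⟩
    simp [h]
  case unique_parent =>
    rintro ⟨_ | ⟨χ, l⟩, hl⟩ hne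
    · exact absurd rfl hne
    · refine ⟨⟨l, hl.2.2⟩, ⟨χ, rfl⟩, ?_⟩
      rintro s ⟨χ', h⟩
      exact Subtype.ext (List.cons.inj h).2.symm
  case root =>
    rintro s ⟨χ, h⟩
    exact List.cons_ne_nil _ _ h.symm

end Unravel

theorem stmt4 (φ : KForm)
    (hsat : ∃ (X : Type) (R : X → X → Prop) (x : X), KForm.sat R x φ) :
    ∃ (X : Type) (_ : Fintype X) (R : X → X → Prop) (root : X),
      KForm.sat R root φ ∧ IsTreeOfDepth R root (KForm.rank φ) := by
  obtain ⟨X, R, x₀, hx₀⟩ := hsat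
  have := Unravel.finite_node (R := R) (x₀ := x₀) (n := φ.rank) φ.finite_boxedSubformulas
  refine ⟨Unravel.Node R x₀ φ.boxedSubformulas φ.rank, Fintype.ofFinite _,
    Unravel.Child R x₀ _ φ.rank, ⟨[], trivial⟩, ?_, Unravel.isTreeOfDepth_child R x₀ _ _⟩
  exact (Unravel.sat_node_iff_sat_label (l := []) subset_rfl trivial (Nat.zero_add _).le).2 hx₀
end

section
/- Let X be a set, f : Set X → Set X a function, τ : V → Set X a valuation, and ψ a finite conjunction ⋀_{i=1}^n ε_i(a_i ⇒ b_i) of literals over the conditional operator, where f satisfies a_i ⇒ b_i iff f(τ(a_i)) ⊆ τ(b_i). If f satisfies ψ, then there exist Y ⊆ X with |Y| ≤ n² + n and f_Y : Set Y → Set Y such that, under the restricted valuation τ_Y(a) = τ(a) ∩ Y, f_Y satisfies each positive literal a_i ⇒ b_i of ψ (i.e., f_Y(τ_Y(a_i)) ⊆ τ_Y(b_i)) and each negative literal ¬(a_i ⇒ b_i) of ψ (i.e., f_Y(τ_Y(a_i)) ⊄ τ_Y(b_i)). -/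
/-- Restriction of a subset of `X` to a subset `Y ⊆ X` (as a subtype). -/
def restr {X : Type} (Y : Set X) (A : Set X) : Set Y := {y : Y | (y : X) ∈ A}

/-- A literal `(true, a, b)` stands for `a ⇒ b`, `(false, a, b)` for `¬(a ⇒ b)`;
`f` satisfies `a ⇒ b` under `τ` iff `f (τ a) ⊆ τ b`. -/
def ckLitSat {X V : Type} (f : Set X → Set X) (τ : V → Set X)
    (l : Bool × V × V) : Prop :=
  if l.1 then f (τ l.2.1) ⊆ τ l.2.2 else ¬ (f (τ l.2.1) ⊆ τ l.2.2)

/-!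
Choose a finite set `Y` of witnesses: for each pair of antecedents `τ aᵢ ≠ τ aⱼ` a point of
`τ aᵢ \ τ aⱼ`, and for each negative literal `¬(aᵢ ⇒ bᵢ)` a point of `f (τ aᵢ) \ τ bᵢ`. The first
kind makes `A ↦ A ∩ Y` injective on the antecedents, so `A ∩ Y ↦ f A ∩ Y` is a well-defined
selection function on `Y`. Intersecting with `Y` preserves inclusions, which keeps the positive
literals true, and the second kind of witness keeps each negative literal false.
-/

namespace Finset

lemma exists_card_le_forall_inter_nonempty {ι X : Type} (s : Finset ι) (S : ι → Set X) :
    ∃ Y : Finset X, Y.card ≤ s.card ∧ ∀ i ∈ s, (S i).Nonempty → (S i ∩ Y).Nonempty := by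
  classical
  induction s using Finset.induction_on with
  | empty => exact ⟨∅, by simp, by simp⟩
  | insert i s hi ih =>
    obtain ⟨Y, hcard, hY⟩ := ih
    rw [card_insert_of_notMem hi]
    by_cases hSi : (S i).Nonempty
    · obtain ⟨x, hx⟩ := hSi
      refine ⟨insert x Y, (card_insert_le x Y).trans (by omega), ?_⟩
      simp only [mem_insert, forall_eq_or_imp, coe_insert]
      exact ⟨fun _ => ⟨x, hx, Set.mem_insert x _⟩,
        fun j hj hSj => (hY j hj hSj).mono (by gcongr; exact Set.subset_insert x _)⟩
    · refine ⟨Y, by omega, ?_⟩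
      simp only [mem_insert, forall_eq_or_imp]
      exact ⟨fun h => absurd h hSi, hY⟩

end Finset

section Restriction

variable {X : Type} (Y : Set X)

lemma restr_mono {A B : Set X} (h : A ⊆ B) : restr Y A ⊆ restr Y B := fun _ hy => h hy

lemma subset_of_restr_subset {A B : Set X} (hwit : (A \ B).Nonempty → (A \ B ∩ Y).Nonempty)
    (h : restr Y A ⊆ restr Y B) : A ⊆ B := by
  by_contra hAB
  obtain ⟨y, ⟨hyA, hyB⟩, hyY⟩ := hwit (Set.sdiff_nonempty.mpr hAB)
  exact hyB (h (show (⟨y, hyY⟩ : Y) ∈ restr Y A from hyA))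

def restrSel (f : Set X → Set X) (𝒜 : Set (Set X)) (S : Set Y) : Set Y :=
  {y | ∃ A ∈ 𝒜, restr Y A = S ∧ (y : X) ∈ f A}

lemma restrSel_restr (f : Set X → Set X) {𝒜 : Set (Set X)} (hinj : Set.InjOn (restr Y) 𝒜)
    {A : Set X} (hA : A ∈ 𝒜) : restrSel Y f 𝒜 (restr Y A) = restr Y (f A) := by
  ext y
  constructor
  · rintro ⟨A', hA', hrestr, hy⟩
    rwa [← hinj hA' hA hrestr]
  · exact fun hy => ⟨A, hA, rfl, hy⟩

lemma ckLitSat_restr {V : Type} {f : Set X → Set X} {fY : Set Y → Set Y} {τ : V → Set X}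
    {l : Bool × V × V} (hfY : fY (restr Y (τ l.2.1)) = restr Y (f (τ l.2.1)))
    (hwit : (f (τ l.2.1) \ τ l.2.2).Nonempty → (f (τ l.2.1) \ τ l.2.2 ∩ Y).Nonempty)
    (h : ckLitSat f τ l) : ckLitSat fY (fun a => restr Y (τ a)) l := by
  unfold ckLitSat at h ⊢
  rw [hfY]
  split_ifs at h ⊢
  · exact restr_mono Y h
  · exact fun hY => h (subset_of_restr_subset Y hwit hY)

end Restriction

theorem stmt6 {X V : Type} (f : Set X → Set X) (τ : V → Set X)
    (ψ : List (Bool × V × V)) (hsat : ∀ l ∈ ψ, ckLitSat f τ l) :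
    ∃ Y : Set X, Y.Finite ∧ Y.ncard ≤ ψ.length ^ 2 + ψ.length ∧
      ∃ fY : Set Y → Set Y,
        ∀ l ∈ ψ, ckLitSat fY (fun a => restr Y (τ a)) l := by
  classical
  set s := ψ.toFinset
  obtain ⟨Y₁, hY₁card, hY₁⟩ :=
    (s ×ˢ s).exists_card_le_forall_inter_nonempty fun p => τ p.1.2.1 \ τ p.2.2.1
  obtain ⟨Y₂, hY₂card, hY₂⟩ := s.exists_card_le_forall_inter_nonempty fun l => f (τ l.2.1) \ τ l.2.2
  set Y : Set X := ↑(Y₁ ∪ Y₂)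
  set 𝒜 : Set (Set X) := {A | ∃ l ∈ ψ, τ l.2.1 = A}
  have hsep : ∀ l ∈ ψ, ∀ l' ∈ ψ,
      (τ l.2.1 \ τ l'.2.1).Nonempty → (τ l.2.1 \ τ l'.2.1 ∩ Y).Nonempty := fun l hl l' hl' h =>
    (hY₁ (l, l') (by simp [s, hl, hl']) h).mono (by gcongr; simp [Y])
  have hinj : Set.InjOn (restr Y) 𝒜 := by
    rintro _ ⟨l, hl, rfl⟩ _ ⟨l', hl', rfl⟩ h
    exact (subset_of_restr_subset Y (hsep l hl l' hl') h.le).antisymm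
      (subset_of_restr_subset Y (hsep l' hl' l hl) h.ge)
  refine ⟨Y, Finset.finite_toSet _, ?_, restrSel Y f 𝒜, fun l hl => ?_⟩
  · have hs : s.card ≤ ψ.length := List.toFinset_card_le ψ
    calc Y.ncard ≤ Y₁.card + Y₂.card := by rw [Set.ncard_coe_finset]; exact Finset.card_union_le _ _
      _ ≤ s.card * s.card + s.card := by rw [← Finset.card_product]; omega
      _ ≤ ψ.length ^ 2 + ψ.length := by rw [sq]; gcongr
  · refine ckLitSat_restr Y (restrSel_restr Y f hinj ⟨l, hl, rfl⟩) (fun h => ?_) (hsat l hl)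
    exact (hY₂ l (List.mem_toFinset.mpr hl) h).mono (by gcongr; simp [Y])
end

section
/- Let f : Set X → 3 (with 3 = {⊥ < * < ⊤}) be the map represented by a partial map f₀ : Set X ⇀ 3 with finite domain, as defined via maxima over finite intersections. Then f satisfies the agglomeration condition (E2'): for all A, B ⊆ X, min(f(A), f(B)) ≤ f(A ∩ B). -/
/- We represent the three-valued set `3 = {⊥ < * < ⊤}` by `Fin 3`
with `⊥ = 0`, `* = 1`, `⊤ = 2`. A partial map `f₀ : Set X ⇀ 3` is given
as a function `Set X → Option (Fin 3)`; its domain is where it is `some`. -/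

/-- The values achievable at `B`: minima of `f₀`-values over nonempty finite
families of domain sets whose intersection is `B`. -/
def Achievable {X : Type} (f₀ : Set X → Option (Fin 3)) (B : Set X) : Set (Fin 3) :=
  {v | ∃ (s : Finset (Set X)) (hs : s.Nonempty),
    (∀ A ∈ s, (f₀ A).isSome) ∧ (⋂ A ∈ s, A) = B ∧
    v = s.inf' hs fun A => (f₀ A).getD 0}

/-- `f` is the total map represented by the partial map `f₀` (which has
finite domain): `f B` is the maximum of the achievable values at `B`,
with default `⊥ = 0` when no value is achievable. -/
def Represents {X : Type} (f₀ : Set X → Option (Fin 3)) (f : Set X → Fin 3) : Prop :=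
  {A | (f₀ A).isSome}.Finite ∧
  ∀ B : Set X, IsGreatest (insert (0 : Fin 3) (Achievable f₀ B)) (f B)

/- The union of the two witnessing families witnesses the intersection, and `inf'`
splits over the union. -/

theorem min_mem_achievable_inter {X : Type} {f₀ : Set X → Option (Fin 3)} {A B : Set X}
    {v w : Fin 3} (hv : v ∈ Achievable f₀ A) (hw : w ∈ Achievable f₀ B) :
    min v w ∈ Achievable f₀ (A ∩ B) := by
  classical
  obtain ⟨s, hs, hdom_s, rfl, rfl⟩ := hv
  obtain ⟨t, ht, hdom_t, rfl, rfl⟩ := hw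
  refine ⟨s ∪ t, hs.mono Finset.subset_union_left, ?_, ?_, (Finset.inf'_union hs ht _).symm⟩
  · intro C hC
    rcases Finset.mem_union.1 hC with h | h
    exacts [hdom_s C h, hdom_t C h]
  · ext x
    simp only [Set.mem_iInter, Set.mem_inter_iff, Finset.mem_union, or_imp, forall_and]

theorem min_mem_insert_zero_achievable_inter {X : Type} {f₀ : Set X → Option (Fin 3)}
    {A B : Set X} {v w : Fin 3} (hv : v ∈ insert 0 (Achievable f₀ A))
    (hw : w ∈ insert 0 (Achievable f₀ B)) :
    min v w ∈ insert 0 (Achievable f₀ (A ∩ B)) := by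
  rcases hv with rfl | hv
  · exact Or.inl (min_eq_left (Fin.zero_le w))
  rcases hw with rfl | hw
  · exact Or.inl (min_eq_right (Fin.zero_le v))
  exact Or.inr (min_mem_achievable_inter hv hw)

theorem stmt11 {X : Type} (f₀ : Set X → Option (Fin 3)) (f : Set X → Fin 3)
    (hrep : Represents f₀ f) :
    ∀ A B : Set X, min (f A) (f B) ≤ f (A ∩ B) := fun A B =>
  (hrep.2 (A ∩ B)).2 <|
    min_mem_insert_zero_achievable_inter (hrep.2 A).1 (hrep.2 B).1
end

section
/- Let f : Set X → 3 be represented by a partial map f₀ : Set X ⇀ 3 with finite domain, and x ∈ X. Then the condition (E3b') — for all A ⊆ X, f(A) = ⊤ implies x ∈ A — holds if and only if for every A ∈ dom(f₀) with f₀(A) = ⊤ we have x ∈ A. -/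
section

variable {X : Type} {f₀ : Set X → Option (Fin 3)} {f : Set X → Fin 3}

theorem mem_achievable_of_eq_some {A : Set X} {v : Fin 3} (h : f₀ A = some v) :
    v ∈ Achievable f₀ A :=
  ⟨{A}, Finset.singleton_nonempty A, by simp [h], by simp, by simp [h]⟩

/-- A minimum equal to `⊤` forces every member of the family to have `f₀`-value `⊤`. -/
theorem mem_of_two_mem_achievable {B : Set X} {x : X} (hB : 2 ∈ Achievable f₀ B)
    (hx : ∀ A : Set X, f₀ A = some 2 → x ∈ A) : x ∈ B := by
  obtain ⟨s, hs, hdom, rfl, htop⟩ := hB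
  refine Set.mem_iInter₂.2 fun A hAs => hx A ?_
  have hA : (f₀ A).getD 0 = 2 := le_antisymm (Fin.le_last _) (htop ▸ Finset.inf'_le _ hAs)
  obtain ⟨v, hv⟩ := Option.isSome_iff_exists.1 (hdom A hAs)
  simpa [hv] using hA

theorem Represents.apply_eq_two_of_eq_some (hrep : Represents f₀ f) {A : Set X}
    (h : f₀ A = some 2) : f A = 2 :=
  le_antisymm (Fin.le_last _)
    ((hrep.2 A).2 (Set.mem_insert_of_mem _ (mem_achievable_of_eq_some h)))

theorem Represents.two_mem_achievable (hrep : Represents f₀ f) {B : Set X} (h : f B = 2) :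
    2 ∈ Achievable f₀ B := by
  have hmem := (hrep.2 B).1
  rw [h] at hmem
  exact hmem.resolve_left (by decide)

end

theorem stmt12 {X : Type} (f₀ : Set X → Option (Fin 3)) (f : Set X → Fin 3)
    (hrep : Represents f₀ f) (x : X) :
    (∀ A : Set X, f A = 2 → x ∈ A) ↔ (∀ A : Set X, f₀ A = some 2 → x ∈ A) :=
  ⟨fun h A hA => h A (hrep.apply_eq_two_of_eq_some hA),
    fun h _ hA => mem_of_two_mem_achievable (hrep.two_mem_achievable hA) h⟩
end

section
/- Let f : Set X → 3 be represented by a partial map f₀ : Set X ⇀ 3 with finite domain, where f additionally satisfies (E2'). Then f(∅) = ⊥ if and only if ⋂ { A ∈ dom(f₀) | f₀(A) > ⊥ } ≠ ∅ (with the empty intersection taken to be X, assumed nonempty). -/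
/-! `f ∅ > ⊥` holds exactly when `∅` is the intersection of finitely many domain sets of
positive value. Since the domain is finite, this happens iff the intersection of all domain
sets of positive value is already empty. -/

theorem Set.Finite.sInter_eq_empty_iff_exists_finset {X : Type} [Nonempty X]
    {S : Set (Set X)} (hS : S.Finite) :
    ⋂₀ S = ∅ ↔ ∃ s : Finset (Set X), s.Nonempty ∧ (∀ A ∈ s, A ∈ S) ∧ ⋂ A ∈ s, A = ∅ := by
  constructor
  · intro hempty
    refine ⟨hS.toFinset, ?_, fun A hA => hS.mem_toFinset.mp hA, ?_⟩
    · rw [hS.toFinset_nonempty]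
      by_contra hS_empty
      rw [Set.not_nonempty_iff_eq_empty.mp hS_empty, Set.sInter_empty] at hempty
      exact Set.univ_nonempty.ne_empty hempty
    · simpa only [Set.Finite.mem_toFinset, Set.sInter_eq_biInter] using hempty
  · rintro ⟨s, -, hsS, hs⟩
    exact Set.subset_eq_empty
      (Set.subset_iInter₂ fun A hA => Set.sInter_subset_of_mem (hsS A hA)) hs

theorem Represents.lt_apply_iff {X : Type} {f₀ : Set X → Option (Fin 3)} {f : Set X → Fin 3}
    (hrep : Represents f₀ f) (u : Fin 3) (B : Set X) :
    u < f B ↔ ∃ s : Finset (Set X), s.Nonempty ∧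
      (∀ A ∈ s, (f₀ A).isSome ∧ u < (f₀ A).getD 0) ∧ ⋂ A ∈ s, A = B := by
  obtain ⟨hmem, hmax⟩ := hrep.2 B
  constructor
  · intro hu
    rcases hmem with h0 | ⟨s, hs, hdom, hB, hv⟩
    · exact absurd (h0 ▸ hu) (Fin.not_lt_zero u)
    · refine ⟨s, hs, fun A hA => ⟨hdom A hA, ?_⟩, hB⟩
      rw [hv, Finset.lt_inf'_iff] at hu
      exact hu A hA
  · rintro ⟨s, hs, hpos, hB⟩
    have hach : s.inf' hs (fun A => (f₀ A).getD 0) ∈ Achievable f₀ B :=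
      ⟨s, hs, fun A hA => (hpos A hA).1, hB, rfl⟩
    exact ((Finset.lt_inf'_iff hs).mpr fun A hA => (hpos A hA).2).trans_le
      (hmax (Set.mem_insert_of_mem _ hach))

theorem stmt14_general {X : Type} [Nonempty X]
    (f₀ : Set X → Option (Fin 3)) (f : Set X → Fin 3)
    (hrep : Represents f₀ f) :
    f ∅ = 0 ↔ ⋂₀ {A | (f₀ A).isSome ∧ 0 < (f₀ A).getD 0} ≠ ∅ := by
  have hfin : {A | (f₀ A).isSome ∧ 0 < (f₀ A).getD 0}.Finite :=
    hrep.1.subset fun A hA => hA.1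
  rw [← not_iff_not, not_not, ← Ne, ← Fin.pos_iff_ne_zero, hrep.lt_apply_iff,
    hfin.sInter_eq_empty_iff_exists_finset]
  rfl

theorem stmt14 {X : Type} [Nonempty X]
    (f₀ : Set X → Option (Fin 3)) (f : Set X → Fin 3)
    (hrep : Represents f₀ f)
    (hE2 : ∀ A B : Set X, min (f A) (f B) ≤ f (A ∩ B)) :
    f ∅ = 0 ↔ ⋂₀ {A | (f₀ A).isSome ∧ 0 < (f₀ A).getD 0} ≠ ∅ :=
  stmt14_general f₀ f hrep
end

section
/- Let X be a set, B : X → ℕ a finitely supported multiset, τ : V → Set X a valuation with V finite, and let ψ be a finite conjunction of literals over Presburger modal atoms Σᵢ aᵢ·#(vᵢ) ∼ b (aᵢ, b integers, ∼ ∈ {<, >, =}), where B satisfies Σᵢ aᵢ·#(vᵢ) ∼ b iff Σᵢ aᵢ·B(τ(vᵢ)) ∼ b with B(A) = Σ_{x∈A} B(x). If B satisfies ψ, then there exists a multiset B' : X → ℕ satisfying ψ under τ such that B'(x) = 0 whenever x and some other element lie in exactly the same sets τ(v), except for one chosen representative per equivalence class; i.e., B' is supported on at most 2^{|V|} elements,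 one for each cell of the Boolean partition of X induced by τ. -/
/-!
Every set `τ v` is a union of fibres of the profile map `x ↦ {v | x ∈ τ v}`. Pushing `B` forward
along a map sending each point to a fixed representative of its fibre therefore keeps every weight
`B(τ v)`, hence the truth of every literal, and the new support meets each of the at most
`2 ^ |V|` fibres in at most one point.
-/

/-- The total weight `B(A) = Σ_{x ∈ A} B(x)` of a set under a finitely
supported multiset `B`. -/
noncomputable def wt {X : Type} (B : X → ℕ) (A : Set X) : ℤ :=
  ∑ᶠ x ∈ A, (B x : ℤ)

/-- A Presburger modal atom `Σᵢ aᵢ·#(vᵢ) ∼ b`, with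
`∼ ∈ {<, =, >}` encoded by `Ordering.lt`, `Ordering.eq`, `Ordering.gt`. -/
structure PAtom (V : Type) where
  coeffs : List (ℤ × V)
  cmp : Ordering
  bnd : ℤ

/-- `B` satisfies `Σᵢ aᵢ·#(vᵢ) ∼ b` iff `Σᵢ aᵢ·B(τ(vᵢ)) ∼ b`. -/
def atomSat {X V : Type} (B : X → ℕ) (τ : V → Set X) (A : PAtom V) : Prop :=
  match A.cmp with
  | Ordering.lt => (A.coeffs.map fun p => p.1 * wt B (τ p.2)).sum < A.bnd
  | Ordering.eq => (A.coeffs.map fun p => p.1 * wt B (τ p.2)).sum = A.bnd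
  | Ordering.gt => (A.coeffs.map fun p => p.1 * wt B (τ p.2)).sum > A.bnd

/-- A literal is a possibly negated atom. -/
def pLitSat {X V : Type} (B : X → ℕ) (τ : V → Set X) (l : Bool × PAtom V) : Prop :=
  if l.1 then atomSat B τ l.2 else ¬ atomSat B τ l.2

section Weight

variable {X Y : Type}

open Classical in
theorem wt_eq_finsupp_sum (B : X →₀ ℕ) (A : Set X) :
    wt B A = B.sum fun x n => if x ∈ A then (n : ℤ) else 0 := by
  rw [wt, finsum_mem_def, finsum_eq_finsetSum_of_support_subset _ (s := B.support)]
  · simp only [Finsupp.sum, Set.indicator_apply]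
  · intro x hx
    rw [Function.mem_support, Set.indicator_apply_ne_zero] at hx
    simpa using hx.2

theorem wt_mapDomain (f : X → Y) (B : X →₀ ℕ) (A : Set Y) :
    wt (B.mapDomain f) A = wt B (f ⁻¹' A) := by
  rw [wt_eq_finsupp_sum, wt_eq_finsupp_sum,
    Finsupp.sum_mapDomain_index (fun _ => by simp) (fun _ _ _ => by split_ifs <;> simp)]
  rfl

theorem wt_congr_of_mem_iff (B : X → ℕ) {A A' : Set X}
    (h : ∀ x, B x ≠ 0 → (x ∈ A ↔ x ∈ A')) : wt B A = wt B A' := by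
  have hsupp : A ∩ Function.support (fun x => (B x : ℤ)) =
      A' ∩ Function.support (fun x => (B x : ℤ)) := by
    ext x
    simp only [Set.mem_inter_iff, Function.mem_support, ne_eq, Nat.cast_eq_zero]
    exact ⟨fun ⟨hA, hx⟩ => ⟨(h x hx).1 hA, hx⟩, fun ⟨hA, hx⟩ => ⟨(h x hx).2 hA, hx⟩⟩
  rw [wt, wt, ← finsum_mem_inter_support, hsupp, finsum_mem_inter_support]

end Weight

theorem atomSat_congr {X V : Type} {B B' : X → ℕ} {τ : V → Set X}
    (h : ∀ v, wt B' (τ v) = wt B (τ v)) (A : PAtom V) :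
    atomSat B' τ A ↔ atomSat B τ A := by
  simp only [atomSat, h]

theorem pLitSat_congr {X V : Type} {B B' : X → ℕ} {τ : V → Set X}
    (h : ∀ v, wt B' (τ v) = wt B (τ v)) (l : Bool × PAtom V) :
    pLitSat B' τ l ↔ pLitSat B τ l := by
  simp only [pLitSat, atomSat_congr h]

section CanonRep

variable {X Y : Type} (p : X → Y)

noncomputable def canonRep (x : X) : X :=
  (exists_apply_eq_apply p x).choose

theorem apply_canonRep (x : X) : p (canonRep p x) = p x :=
  (exists_apply_eq_apply p x).choose_spec

theorem injOn_range_canonRep : Set.InjOn p (Set.range (canonRep p)) := by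
  rintro _ ⟨x, rfl⟩ _ ⟨y, rfl⟩ h
  rw [apply_canonRep p x, apply_canonRep p y] at h
  simp only [canonRep, h]

end CanonRep

theorem exists_injOn_support_wt_eq_of_saturated {X Y : Type} (B : X →₀ ℕ) (p : X → Y) :
    ∃ B' : X →₀ ℕ, (∀ A : Set X, (∀ x y, p x = p y → (x ∈ A ↔ y ∈ A)) → wt B' A = wt B A) ∧
      Set.InjOn p B'.support := by
  classical
  refine ⟨B.mapDomain (canonRep p), fun A hA => ?_, ?_⟩
  · rw [wt_mapDomain]
    exact wt_congr_of_mem_iff B fun x _ => hA _ _ (apply_canonRep p x)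
  · refine (injOn_range_canonRep p).mono fun x hx => ?_
    obtain ⟨y, -, rfl⟩ := Finset.mem_image.mp (Finsupp.mapDomain_support hx)
    exact ⟨y, rfl⟩

theorem stmt18 {X V : Type} [Fintype V] (B : X → ℕ) (τ : V → Set X)
    (hB : (Function.support B).Finite)
    (ψ : List (Bool × PAtom V)) (hsat : ∀ l ∈ ψ, pLitSat B τ l) :
    ∃ B' : X → ℕ,
      (Function.support B').Finite ∧
      (∀ l ∈ ψ, pLitSat B' τ l) ∧
      (Function.support B').ncard ≤ 2 ^ Fintype.card V ∧
      (∀ y z : X, B' y ≠ 0 → B' z ≠ 0 →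
        (∀ v : V, y ∈ τ v ↔ z ∈ τ v) → y = z) := by
  set profile : X → Set V := fun x => {v | x ∈ τ v}
  obtain ⟨B', hwt, hinj⟩ :=
    exists_injOn_support_wt_eq_of_saturated (Finsupp.ofSupportFinite B hB) profile
  have hwt_τ : ∀ v, wt B' (τ v) = wt B (τ v) := fun v => by
    rw [hwt (τ v) fun x y hxy => Set.ext_iff.mp hxy v, Finsupp.ofSupportFinite_coe]
  have hinj_support : Set.InjOn profile (Function.support B') := by simpa using hinj
  refine ⟨B', B'.hasFiniteSupport, fun l hl => (pLitSat_congr hwt_τ l).2 (hsat l hl), ?_,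
    fun y z hy hz hyz => hinj_support hy hz (Set.ext hyz)⟩
  calc (Function.support B').ncard = (profile '' Function.support B').ncard :=
        hinj_support.ncard_image.symm
    _ ≤ Nat.card (Set V) := Set.ncard_le_card _
    _ = 2 ^ Fintype.card V := by rw [Nat.card_eq_fintype_card, Fintype.card_set]
end

section
/- Every modal formula of rank n over a modal signature Λ interpreted by monotone-free predicate liftings over the covariant powerset functor — in particular every formula of graded modal logic, whose satisfaction at a state of an ℕ-weighted Kripke frame (X, B : X → X → ℕ with finite support) is given by x ⊨ ◇_k φ iff Σ_{y ⊨ φ} B(x)(y) > k — that is satisfiable in some ℕ-weighted Kripke frame is satisfiable at the root of a finite ℕ-weighted frame whose underlying support graph ({(x,y) | B(x)(y) > 0}) is a tree of depth at most n. -/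
/-- Formulas of graded modal logic, with operators `◇_k` for `k ∈ ℕ`. -/
inductive GForm : Type
  | bot : GForm
  | neg : GForm → GForm
  | and : GForm → GForm → GForm
  | dia : ℕ → GForm → GForm

namespace GForm

/-- Rank: maximal nesting depth of modalities. -/
def rank : GForm → ℕ
  | bot => 0
  | neg φ => rank φ
  | and φ ψ => max (rank φ) (rank ψ)
  | dia _ φ => rank φ + 1

/-- Satisfaction over an ℕ-weighted Kripke frame `B : X → X → ℕ`:
`x ⊨ ◇_k φ` iff the total multiplicity of successors of `x` satisfying `φ`
exceeds `k`. -/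
noncomputable def sat {X : Type} (B : X → X → ℕ) : X → GForm → Prop
  | _, bot => False
  | x, neg φ => ¬ sat B x φ
  | x, and φ ψ => sat B x φ ∧ sat B x ψ
  | x, dia k φ => (∑ᶠ y ∈ {y : X | sat B y φ}, B x y) > k

end GForm

/-!
Unravel the frame from the satisfying state `x₀` into the tree of its paths of length at most
`rank φ`, weighting the edge from a path to each one-step extension by the weight of the last edge.
Sending a path to its endpoint is a bijection from the successors of a path onto the successors of
its endpoint that preserves weights, so the weighted counts defining `◇_k` agree, and a formula of
rank `r` holds at a path of length `ℓ ≤ rank φ - r` iff it holds at its endpoint. Finite branching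
of the frame makes the tree finite.
-/

open Function Set

theorem finsum_mem_eq_of_bijOn_support {Y X M : Type*} [AddCommMonoid M] {f : Y → X}
    {u : Y → M} {v : X → M} {S : Set Y} {T : Set X}
    (hbij : BijOn f (support u) (support v)) (huv : ∀ z ∈ support u, u z = v (f z))
    (hST : ∀ z ∈ support u, z ∈ S ↔ f z ∈ T) :
    ∑ᶠ z ∈ S, u z = ∑ᶠ x ∈ T, v x := by
  rw [← finsum_mem_inter_support, ← finsum_mem_inter_support v]
  refine finsum_mem_eq_of_bijOn f ⟨?_, hbij.injOn.mono inter_subset_right, ?_⟩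
    fun z hz => huv z hz.2
  · rintro z ⟨hzS, hz⟩
    exact ⟨(hST z hz).1 hzS, hbij.mapsTo hz⟩
  · rintro x ⟨hxT, hx⟩
    obtain ⟨z, hz, rfl⟩ := hbij.surjOn hx
    exact ⟨z, ⟨(hST z hz).2 hxT, hz⟩, rfl⟩

namespace GForm

theorem sat_iff_of_bijOn_support {Y X : Type} {C : Y → Y → ℕ} {B : X → X → ℕ}
    (f : Y → X) (d : Y → ℕ) (n : ℕ)
    (hbij : ∀ y, d y < n → BijOn f (support (C y)) (support (B (f y))))
    (hweight : ∀ y, d y < n → ∀ z ∈ support (C y), C y z = B (f y) (f z))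
    (hdepth : ∀ y, d y < n → ∀ z ∈ support (C y), d z ≤ d y + 1) :
    ∀ (ψ : GForm) (y : Y), d y + ψ.rank ≤ n → (sat C y ψ ↔ sat B (f y) ψ) := by
  intro ψ
  induction ψ with
  | bot => exact fun _ _ => Iff.rfl
  | neg ψ ih => exact fun y hy => not_congr (ih y hy)
  | and ψ χ ihψ ihχ =>
    intro y hy
    simp only [rank] at hy
    exact and_congr (ihψ y (by omega)) (ihχ y (by omega))
  | dia k ψ ih =>
    intro y hy
    simp only [rank] at hy
    have hlt : d y < n := by omega
    have hsum : ∑ᶠ z ∈ {z | sat C z ψ}, C y z = ∑ᶠ x ∈ {x | sat B x ψ}, B (f y) x :=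
      finsum_mem_eq_of_bijOn_support (hbij y hlt) (hweight y hlt) fun z hz =>
        ih z (by have := hdepth y hlt z hz; omega)
    rw [sat, sat, hsum]

end GForm

namespace Unravelling

variable {X : Type} (B : X → X → ℕ) (x₀ : X)

/- A path from `x₀` is stored newest state first: its endpoint is `p.headD x₀` and its parent
is `p.tail`. -/
inductive IsPath : List X → Prop
  | nil : IsPath []
  | cons {p : List X} {y : X} : IsPath p → 0 < B (p.headD x₀) y → IsPath (y :: p)

def paths (n : ℕ) : Set (List X) := {p | IsPath B x₀ p ∧ p.length ≤ n}

def weight [DecidableEq X] : List X → List X → ℕ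
  | _, [] => 0
  | p, y :: q => if q = p then B (p.headD x₀) y else 0

def unravel [DecidableEq X] (n : ℕ) (p q : paths B x₀ n) : ℕ := weight B x₀ p q

def root (n : ℕ) : paths B x₀ n := ⟨[], .nil, Nat.zero_le n⟩

variable {B x₀}

theorem weight_cons_self [DecidableEq X] (p : List X) (y : X) :
    weight B x₀ p (y :: p) = B (p.headD x₀) y := if_pos rfl

theorem weight_ne_zero_iff [DecidableEq X] {p q : List X} :
    weight B x₀ p q ≠ 0 ↔ ∃ y, q = y :: p ∧ B (p.headD x₀) y ≠ 0 := by
  cases q with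
  | nil => simp [weight]
  | cons y q =>
    by_cases h : q = p
    · subst h; simp [weight_cons_self]
    · simp [weight, h]

theorem finite_paths (hfin : ∀ x, (support (B x)).Finite) (n : ℕ) : (paths B x₀ n).Finite := by
  induction n with
  | zero =>
    refine (finite_singleton []).subset fun p hp => ?_
    simpa using hp.2
  | succ n ih =>
    refine ((ih.biUnion fun p _ => (hfin (p.headD x₀)).image (· :: p)).insert []).subset ?_
    rintro _ ⟨hq | ⟨hp, hy⟩, hl⟩
    · exact mem_insert _ _
    · refine mem_insert_of_mem _ (mem_biUnion ⟨hp, ?_⟩ ⟨_, hy.ne', rfl⟩)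
      simpa using hl

variable {n : ℕ}

theorem cons_mem_paths {p : List X} (hp : p ∈ paths B x₀ n) (hlen : p.length < n) {y : X}
    (hy : B (p.headD x₀) y ≠ 0) : y :: p ∈ paths B x₀ n :=
  ⟨.cons hp.1 (Nat.pos_of_ne_zero hy), hlen⟩

variable [DecidableEq X]

theorem bijOn_support_unravel (p : paths B x₀ n) (hp : p.1.length < n) :
    BijOn (fun q : paths B x₀ n => q.1.headD x₀) (support (unravel B x₀ n p))
      (support (B (p.1.headD x₀))) := by
  refine ⟨?_, ?_, ?_⟩
  · intro q hq
    obtain ⟨y, hq, hy⟩ := weight_ne_zero_iff.1 hq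
    simpa [hq] using hy
  · intro q₁ hq₁ q₂ hq₂ h
    obtain ⟨y₁, hq₁, -⟩ := weight_ne_zero_iff.1 hq₁
    obtain ⟨y₂, hq₂, -⟩ := weight_ne_zero_iff.1 hq₂
    simp only [hq₁, hq₂, List.headD_cons] at h
    exact Subtype.ext (by rw [hq₁, hq₂, h])
  · intro y hy
    refine ⟨⟨y :: p.1, cons_mem_paths p.2 hp hy⟩, ?_, rfl⟩
    simpa [unravel, weight_cons_self] using hy

theorem unravel_eq_of_mem_support {p q : paths B x₀ n} (hq : q ∈ support (unravel B x₀ n p)) :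
    unravel B x₀ n p q = B (p.1.headD x₀) (q.1.headD x₀) := by
  obtain ⟨y, hq, -⟩ := weight_ne_zero_iff.1 hq
  simp [unravel, hq, weight_cons_self]

theorem length_eq_of_mem_support {p q : paths B x₀ n} (hq : q ∈ support (unravel B x₀ n p)) :
    q.1.length = p.1.length + 1 := by
  obtain ⟨y, hq, -⟩ := weight_ne_zero_iff.1 hq
  simp [hq]

theorem sat_unravel_iff (ψ : GForm) (p : paths B x₀ n) (hp : p.1.length + ψ.rank ≤ n) :
    GForm.sat (unravel B x₀ n) p ψ ↔ GForm.sat B (p.1.headD x₀) ψ :=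
  GForm.sat_iff_of_bijOn_support _ (fun p => p.1.length) n bijOn_support_unravel
    (fun _ _ _ => unravel_eq_of_mem_support) (fun _ _ _ hq => (length_eq_of_mem_support hq).le)
    ψ p hp

theorem reflTransGen_root_unravel {q : List X} (hq : IsPath B x₀ q) (hlen : q.length ≤ n) :
    Relation.ReflTransGen (fun p q => unravel B x₀ n p q > 0) (root B x₀ n) ⟨q, hq, hlen⟩ := by
  induction hq with
  | nil => exact .refl
  | @cons p y hp hy ih =>
    refine .tail (ih (by simp at hlen; omega)) ?_
    simpa [unravel, weight_cons_self] using hy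

theorem isTreeOfDepth_unravel :
    IsTreeOfDepth (fun p q => unravel B x₀ n p q > 0) (root B x₀ n) n := by
  refine ⟨fun p => p.1.length, rfl, fun q => reflTransGen_root_unravel q.2.1 q.2.2,
    fun p q hpq => length_eq_of_mem_support hpq.ne', fun p => p.2.2, ?_, ?_⟩
  · rintro ⟨_ | ⟨y, p⟩, hq, hlen⟩ hne
    · exact absurd rfl hne
    · obtain _ | ⟨hp, hy⟩ := hq
      refine ⟨⟨p, hp, by simp at hlen; omega⟩, ?_, ?_⟩
      · simpa [unravel, weight_cons_self] using hy
      · intro p' hp'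
        obtain ⟨y', hq, -⟩ := weight_ne_zero_iff.1 hp'.ne'
        exact Subtype.ext (List.cons.inj hq).2.symm
  · intro p hp
    exact hp.ne' rfl

end Unravelling

theorem stmt19 (φ : GForm)
    (hsat : ∃ (X : Type) (B : X → X → ℕ) (x : X),
      (∀ y : X, (Function.support (B y)).Finite) ∧ GForm.sat B x φ) :
    ∃ (X : Type) (_ : Fintype X) (B : X → X → ℕ) (root : X),
      GForm.sat B root φ ∧
      IsTreeOfDepth (fun x y => B x y > 0) root (GForm.rank φ) := by
  classical
  obtain ⟨X, B, x₀, hfin, hx₀⟩ := hsat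
  have : Finite (Unravelling.paths B x₀ φ.rank) := (Unravelling.finite_paths hfin _).to_subtype
  refine ⟨_, Fintype.ofFinite _, Unravelling.unravel B x₀ φ.rank, Unravelling.root B x₀ φ.rank,
    ?_, Unravelling.isTreeOfDepth_unravel⟩
  exact (Unravelling.sat_unravel_iff φ _ (by simp [Unravelling.root])).2 hx₀
end
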